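/- Let c_1, c_2, d_1, d_2 be strictly decreasing words (column words) over {1,...,n} such that the multiset union of letters of c_1 c_2 equals that of d_1 d_2. Suppose there is a letter i such that: (I) i occurs in c_1 but not c_2, i occurs in d_2 but not d_1, and apart from the placement of i the pairs agree (c_1 with i removed equals d_1, and c_2 with i inserted equals d_2); (II) if i' denotes the greatest letter strictly smaller than i occurring in c_1 c_2, then c_2 contains i'; and (III) whenever c_2 contains a letter z > i, the word c_1 contains some letter z' with i < z' ≤ z. Then for all 1 ≤ p ≤ q ≤ n, the maximum length of a weakly increasing subsequence with entries in [p,q] is the same in c_1 c_2 as in d_1 d_2. -/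

import Mathlib

/-! A weakly increasing subsequence meets each strictly decreasing column at most once, so in
the concatenation of two columns it is empty, a single letter, or a pair `a ≤ b` with `a` in the
first column and `b` in the second. Moving `i` from the first to the second column keeps the set
of letters, so only the pairs matter. A pair `(i, b)` lost in the move is replaced by `(z', b)`
with `i < z' ≤ b` from (III); a new pair `(a, i)` is dominated by `(a, i')`, since `a < i` forces
`a ≤ i'`, and `i' ∈ c₂` by (II). -/

/-- The maximum length of a weakly increasing subsequence of `w` all of whose
letters lie in the interval `[p, q]`. -/
def wis (w : List ℕ) (p q : ℕ) : ℕ :=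
  ((w.sublists.filter (fun s => decide (s.Pairwise (· ≤ ·) ∧ ∀ a ∈ s, p ≤ a ∧ a ≤ q))).map
    List.length).foldr max 0

theorem wis_le_iff {w : List ℕ} {p q m : ℕ} :
    wis w p q ≤ m ↔ ∀ s : List ℕ, s.Sublist w → s.Pairwise (· ≤ ·) → (∀ a ∈ s, p ≤ a ∧ a ≤ q) →
      s.length ≤ m := by
  constructor
  · intro h s hs hsort hr
    refine le_trans (List.le_max_of_le' 0 ?_ le_rfl) h
    simp only [List.mem_map, List.mem_filter, List.mem_sublists, decide_eq_true_eq]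
    exact ⟨s, ⟨hs, hsort, hr⟩, rfl⟩
  · intro h
    refine List.max_le_of_forall_le _ _ fun x hx => ?_
    simp only [List.mem_map, List.mem_filter, List.mem_sublists, decide_eq_true_eq] at hx
    obtain ⟨s, ⟨hs, hsort, hr⟩, rfl⟩ := hx
    exact h s hs hsort hr

theorem le_wis {w s : List ℕ} {p q : ℕ} (hs : s.Sublist w) (hsort : s.Pairwise (· ≤ ·))
    (hr : ∀ a ∈ s, p ≤ a ∧ a ≤ q) : s.length ≤ wis w p q :=
  wis_le_iff.1 le_rfl s hs hsort hr

theorem one_le_wis_of_mem {w : List ℕ} {a p q : ℕ} (ha : a ∈ w) (hr : p ≤ a ∧ a ≤ q) :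
    1 ≤ wis w p q :=
  le_wis (List.singleton_sublist.2 ha) (List.pairwise_singleton _ _) (by simpa using hr)

theorem List.length_le_one_of_pairwise_le_of_pairwise_gt {α : Type*} [Preorder α] {s : List α}
    (h₁ : s.Pairwise (· ≤ ·)) (h₂ : s.Pairwise (· > ·)) : s.length ≤ 1 := by
  match s, h₁, h₂ with
  | [], _, _ | [_], _, _ => simp
  | _ :: _ :: _, h₁, h₂ =>
    exact absurd (List.rel_of_pairwise_cons h₁ List.mem_cons_self)
      (List.rel_of_pairwise_cons h₂ List.mem_cons_self).not_ge

def HasIncreasingPair (u v : List ℕ) (p q : ℕ) : Prop :=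
  ∃ a ∈ u, ∃ b ∈ v, p ≤ a ∧ a ≤ b ∧ b ≤ q

theorem HasIncreasingPair.mono {u₁ u₂ v₁ v₂ : List ℕ} {p q : ℕ} (h : HasIncreasingPair u₁ u₂ p q)
    (h₁ : u₁ ⊆ v₁) (h₂ : u₂ ⊆ v₂) : HasIncreasingPair v₁ v₂ p q := by
  obtain ⟨a, ha, b, hb, hab⟩ := h
  exact ⟨a, h₁ ha, b, h₂ hb, hab⟩

theorem two_le_wis_of_hasIncreasingPair {v₁ v₂ : List ℕ} {p q : ℕ}
    (h : HasIncreasingPair v₁ v₂ p q) : 2 ≤ wis (v₁ ++ v₂) p q := by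
  obtain ⟨a, ha, b, hb, hpa, hab, hbq⟩ := h
  refine le_wis (s := [a, b]) ((List.singleton_sublist.2 ha).append (List.singleton_sublist.2 hb))
    (by simpa using hab) ?_
  simp only [List.mem_cons, List.not_mem_nil, or_false, forall_eq_or_imp, forall_eq]
  omega

theorem wis_append_le_of_hasIncreasingPair {u₁ u₂ v₁ v₂ : List ℕ} {p q : ℕ}
    (hu₁ : u₁.Pairwise (· > ·)) (hu₂ : u₂.Pairwise (· > ·)) (hmem : u₁ ++ u₂ ⊆ v₁ ++ v₂)
    (hpair : HasIncreasingPair u₁ u₂ p q → HasIncreasingPair v₁ v₂ p q) :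
    wis (u₁ ++ u₂) p q ≤ wis (v₁ ++ v₂) p q := by
  refine wis_le_iff.2 fun s hs hsort hr => ?_
  obtain ⟨s₁, s₂, rfl, h₁, h₂⟩ := List.sublist_append_iff.1 hs
  have l₁ := List.length_le_one_of_pairwise_le_of_pairwise_gt
    (hsort.sublist (List.sublist_append_left _ _)) (hu₁.sublist h₁)
  have l₂ := List.length_le_one_of_pairwise_le_of_pairwise_gt
    (hsort.sublist (List.sublist_append_right _ _)) (hu₂.sublist h₂)
  match s₁, s₂ with
  | [], [] => simp
  | [], [x] | [x], [] =>
    simpa using one_le_wis_of_mem (hmem (hs.subset (by simp))) (hr x (by simp))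
  | [a], [b] =>
    exact two_le_wis_of_hasIncreasingPair <| hpair ⟨a, h₁.subset (by simp), b,
      h₂.subset (by simp), (hr a (by simp)).1, List.rel_of_pairwise_cons hsort (by simp),
      (hr b (by simp)).2⟩

theorem HasIncreasingPair.erase_left {u₁ u₂ : List ℕ} {i p q : ℕ} (h : HasIncreasingPair u₁ u₂ p q)
    (hi : i ∉ u₂) (hIII : ∀ z ∈ u₂, i < z → ∃ z' ∈ u₁, i < z' ∧ z' ≤ z) :
    HasIncreasingPair (u₁.erase i) u₂ p q := by
  obtain ⟨a, ha, b, hb, hpa, hab, hbq⟩ := h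
  by_cases hai : a = i
  · subst hai
    have hab : a < b := lt_of_le_of_ne hab fun h => hi (h ▸ hb)
    obtain ⟨z', hz', haz', hz'b⟩ := hIII b hb hab
    exact ⟨z', (List.mem_erase_of_ne haz'.ne').2 hz', b, hb, by omega, hz'b, hbq⟩
  · exact ⟨a, (List.mem_erase_of_ne hai).2 ha, b, hb, hpa, hab, hbq⟩

theorem HasIncreasingPair.erase_right {v₁ v₂ : List ℕ} {i i' p q : ℕ}
    (h : HasIncreasingPair v₁ v₂ p q) (hi : i ∉ v₁) (hi'lt : i' < i)
    (hi'max : ∀ a ∈ v₁, a < i → a ≤ i') (hi'mem : i' ∈ v₂) :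
    HasIncreasingPair v₁ (v₂.erase i) p q := by
  obtain ⟨a, ha, b, hb, hpa, hab, hbq⟩ := h
  by_cases hbi : b = i
  · subst hbi
    have hab : a < b := lt_of_le_of_ne hab fun h => hi (h ▸ ha)
    exact ⟨a, ha, i', (List.mem_erase_of_ne hi'lt.ne).2 hi'mem, hpa, hi'max a ha hab, by omega⟩
  · exact ⟨a, ha, b, (List.mem_erase_of_ne hbi).2 hb, hpa, hab, hbq⟩

theorem stmt15_general (n : ℕ) (c1 c2 d1 d2 : List ℕ)
    (hc1 : c1.Pairwise (· > ·)) (hc2 : c2.Pairwise (· > ·))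
    (hd1 : d1.Pairwise (· > ·)) (hd2 : d2.Pairwise (· > ·))
    (hperm : (c1 ++ c2).Perm (d1 ++ d2))
    (i : ℕ)
    (hic2 : i ∉ c2) (hid1 : i ∉ d1)
    (hmove1 : c1.erase i = d1) (hmove2 : d2.erase i = c2)
    (i' : ℕ) (hi'lt : i' < i)
    (hi'max : ∀ a ∈ c1 ++ c2, a < i → a ≤ i')
    (hII : i' ∈ c2)
    (hIII : ∀ z ∈ c2, i < z → ∃ z' ∈ c1, i < z' ∧ z' ≤ z) :
    ∀ p q : ℕ, 1 ≤ p → p ≤ q → q ≤ n →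
      wis (c1 ++ c2) p q = wis (d1 ++ d2) p q := by
  intro p q _ _ _
  have hd1c1 : d1 ⊆ c1 := hmove1 ▸ List.erase_subset
  have hc2d2 : c2 ⊆ d2 := hmove2 ▸ List.erase_subset
  apply le_antisymm
  · refine wis_append_le_of_hasIncreasingPair hc1 hc2 hperm.subset fun h => ?_
    exact (h.erase_left hic2 hIII).mono (hmove1 ▸ List.Subset.refl _) hc2d2
  · refine wis_append_le_of_hasIncreasingPair hd1 hd2 hperm.symm.subset fun h => ?_
    have h' := h.erase_right hid1 hi'lt
      (fun a ha => hi'max a (List.mem_append_left _ (hd1c1 ha))) (hc2d2 hII)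
    exact h'.mono hd1c1 (hmove2 ▸ List.Subset.refl _)

theorem stmt15 (n : ℕ) (c1 c2 d1 d2 : List ℕ)
    (hc1 : c1.Pairwise (· > ·)) (hc2 : c2.Pairwise (· > ·))
    (hd1 : d1.Pairwise (· > ·)) (hd2 : d2.Pairwise (· > ·))
    (hc1n : c1 ≠ []) (hc2n : c2 ≠ []) (hd1n : d1 ≠ []) (hd2n : d2 ≠ [])
    (halph : ∀ a ∈ c1 ++ c2 ++ d1 ++ d2, 1 ≤ a ∧ a ≤ n)
    (hperm : (c1 ++ c2).Perm (d1 ++ d2))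
    (i : ℕ)
    (hic1 : i ∈ c1) (hic2 : i ∉ c2) (hid2 : i ∈ d2) (hid1 : i ∉ d1)
    (hmove1 : c1.erase i = d1) (hmove2 : d2.erase i = c2)
    (i' : ℕ) (hi'mem : i' ∈ c1 ++ c2) (hi'lt : i' < i)
    (hi'max : ∀ a ∈ c1 ++ c2, a < i → a ≤ i')
    (hII : i' ∈ c2)
    (hIII : ∀ z ∈ c2, i < z → ∃ z' ∈ c1, i < z' ∧ z' ≤ z) :
    ∀ p q : ℕ, 1 ≤ p → p ≤ q → q ≤ n →
      wis (c1 ++ c2) p q = wis (d1 ++ d2) p q :=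
  stmt15_general n c1 c2 d1 d2 hc1 hc2 hd1 hd2 hperm i hic2 hid1 hmove1 hmove2 i' hi'lt hi'max hII
    hIII
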